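/- Let g : ℝ² → GL(n,ℂ) be a smooth solution of the chiral field equation (g⁻¹g_x)_x + (g⁻¹g_t)_t = 0, let X : ℝ² → M_n(ℂ) be a smooth potential satisfying X_x = g⁻¹g_t and X_t = -g⁻¹g_x, and let M be a constant n×n matrix. Then Φ' = [X, M] satisfies the linearized chiral symmetry condition ∂ₓ(Φ'_x + [g⁻¹g_x, Φ']) + ∂ₜ(Φ'_t + [g⁻¹g_t, Φ']) = 0. -/

import Mathlib

attribute [local instance] Matrix.normedAddCommGroup Matrix.normedSpace

/-- partial derivative in the first variable, for matrix-valued functions -/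
noncomputable def Px {n : ℕ} (f : ℝ → ℝ → Matrix (Fin n) (Fin n) ℂ) :
    ℝ → ℝ → Matrix (Fin n) (Fin n) ℂ := fun x t => deriv (fun x' => f x' t) x

/-- partial derivative in the second variable, for matrix-valued functions -/
noncomputable def Pt {n : ℕ} (f : ℝ → ℝ → Matrix (Fin n) (Fin n) ℂ) :
    ℝ → ℝ → Matrix (Fin n) (Fin n) ℂ := fun x t => deriv (fun t' => f x t') t

namespace ChiralAux

abbrev Mat (n : ℕ) := Matrix (Fin n) (Fin n) ℂ

/-- matrix multiplication as a continuous bilinear map over ℝ -/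
noncomputable def mulL (n : ℕ) : Mat n →L[ℝ] Mat n →L[ℝ] Mat n :=
  LinearMap.toContinuousLinearMap
    (((LinearMap.toContinuousLinearMap :
        (Mat n →ₗ[ℝ] Mat n) ≃ₗ[ℝ] (Mat n →L[ℝ] Mat n)).toLinearMap).comp
      (LinearMap.mul ℝ (Mat n)))

@[simp] lemma mulL_apply {n : ℕ} (a b : Mat n) : mulL n a b = a * b := by
  simp [mulL]

lemma hasDerivAt_mul' {n : ℕ} {u v : ℝ → Mat n} {u' v' : Mat n} {x : ℝ}
    (hu : HasDerivAt u u' x) (hv : HasDerivAt v v' x) :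
    HasDerivAt (fun y => u y * v y) (u' * v x + u x * v') x := by
  have h := ((mulL n).isBoundedBilinearMap.hasFDerivAt (u x, v x)).comp_hasDerivAt x
    (hu.prodMk hv)
  have hval : ((mulL n).isBoundedBilinearMap.deriv (u x, v x)) (u', v')
      = u' * v x + u x * v' := by
    rw [IsBoundedBilinearMap.deriv_apply]
    simp [add_comm]
    exact congrArg₂ (· + ·) (mulL_apply _ _) (mulL_apply _ _)
  rw [hval] at h
  exact h

lemma hasDerivAt_mulConst {n : ℕ} {u : ℝ → Mat n} {u' : Mat n} {x : ℝ}
    (hu : HasDerivAt u u' x) (c : Mat n) :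
    HasDerivAt (fun y => u y * c) (u' * c) x := by
  simpa using hasDerivAt_mul' hu (hasDerivAt_const x c)

lemma hasDerivAt_constMul {n : ℕ} {u : ℝ → Mat n} {u' : Mat n} {x : ℝ}
    (hu : HasDerivAt u u' x) (c : Mat n) :
    HasDerivAt (fun y => c * u y) (c * u') x := by
  simpa using hasDerivAt_mul' (hasDerivAt_const x c) hu

lemma contDiff_mul2 {n : ℕ} {F G : ℝ × ℝ → Mat n}
    (hF : ContDiff ℝ (⊤ : ℕ∞) F) (hG : ContDiff ℝ (⊤ : ℕ∞) G) :
    ContDiff ℝ (⊤ : ℕ∞) (fun p => F p * G p) := by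
  have h := ((mulL n).isBoundedBilinearMap.contDiff (n := (⊤ : ℕ∞))).comp (hF.prodMk hG)
  convert h using 1
  funext p
  exact (mulL_apply _ _).symm

variable {n : ℕ} {f : ℝ → ℝ → Mat n}

lemma hasDerivAt_line1 (f : ℝ → ℝ → Mat n)
    (hf : ContDiff ℝ (⊤ : ℕ∞) (fun p : ℝ × ℝ => f p.1 p.2)) (x t : ℝ) :
    HasDerivAt (fun x' => f x' t)
      (fderiv ℝ (fun p : ℝ × ℝ => f p.1 p.2) (x, t) (1, 0)) x := by
  have hdiff : DifferentiableAt ℝ (fun p : ℝ × ℝ => f p.1 p.2) (x, t) :=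
    (hf.differentiable (by simp)).differentiableAt
  have h1 : HasDerivAt (fun x' : ℝ => ((x', t) : ℝ × ℝ)) ((1 : ℝ), (0 : ℝ)) x :=
    (hasDerivAt_id x).prodMk (hasDerivAt_const x t)
  exact hdiff.hasFDerivAt.comp_hasDerivAt x h1

lemma hasDerivAt_line2 (f : ℝ → ℝ → Mat n)
    (hf : ContDiff ℝ (⊤ : ℕ∞) (fun p : ℝ × ℝ => f p.1 p.2)) (x t : ℝ) :
    HasDerivAt (fun t' => f x t')
      (fderiv ℝ (fun p : ℝ × ℝ => f p.1 p.2) (x, t) (0, 1)) t := by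
  have hdiff : DifferentiableAt ℝ (fun p : ℝ × ℝ => f p.1 p.2) (x, t) :=
    (hf.differentiable (by simp)).differentiableAt
  have h1 : HasDerivAt (fun t' : ℝ => ((x, t') : ℝ × ℝ)) ((0 : ℝ), (1 : ℝ)) t :=
    (hasDerivAt_const t x).prodMk (hasDerivAt_id t)
  exact hdiff.hasFDerivAt.comp_hasDerivAt t h1

lemma Px_eq_fderiv (hf : ContDiff ℝ (⊤ : ℕ∞) (fun p : ℝ × ℝ => f p.1 p.2)) (x t : ℝ) :
    Px f x t = fderiv ℝ (fun p : ℝ × ℝ => f p.1 p.2) (x, t) (1, 0) :=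
  (hasDerivAt_line1 f hf x t).deriv

lemma Pt_eq_fderiv (hf : ContDiff ℝ (⊤ : ℕ∞) (fun p : ℝ × ℝ => f p.1 p.2)) (x t : ℝ) :
    Pt f x t = fderiv ℝ (fun p : ℝ × ℝ => f p.1 p.2) (x, t) (0, 1) :=
  (hasDerivAt_line2 f hf x t).deriv

lemma hasDerivAt_Px (hf : ContDiff ℝ (⊤ : ℕ∞) (fun p : ℝ × ℝ => f p.1 p.2)) (x t : ℝ) :
    HasDerivAt (fun x' => f x' t) (Px f x t) x := by
  rw [Px_eq_fderiv hf]; exact hasDerivAt_line1 f hf x t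

lemma hasDerivAt_Pt (hf : ContDiff ℝ (⊤ : ℕ∞) (fun p : ℝ × ℝ => f p.1 p.2)) (x t : ℝ) :
    HasDerivAt (fun t' => f x t') (Pt f x t) t := by
  rw [Pt_eq_fderiv hf]; exact hasDerivAt_line2 f hf x t

lemma contDiff_Px (hf : ContDiff ℝ (⊤ : ℕ∞) (fun p : ℝ × ℝ => f p.1 p.2)) :
    ContDiff ℝ (⊤ : ℕ∞) (fun p : ℝ × ℝ => Px f p.1 p.2) := by
  have heq : (fun p : ℝ × ℝ => Px f p.1 p.2)
      = fun p : ℝ × ℝ => fderiv ℝ (fun q : ℝ × ℝ => f q.1 q.2) p ((1 : ℝ), (0 : ℝ)) := by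
    funext p; exact Px_eq_fderiv hf p.1 p.2
  rw [heq]
  exact (hf.fderiv_right (by simp)).clm_apply contDiff_const

lemma contDiff_Pt (hf : ContDiff ℝ (⊤ : ℕ∞) (fun p : ℝ × ℝ => f p.1 p.2)) :
    ContDiff ℝ (⊤ : ℕ∞) (fun p : ℝ × ℝ => Pt f p.1 p.2) := by
  have heq : (fun p : ℝ × ℝ => Pt f p.1 p.2)
      = fun p : ℝ × ℝ => fderiv ℝ (fun q : ℝ × ℝ => f q.1 q.2) p ((0 : ℝ), (1 : ℝ)) := by
    funext p; exact Pt_eq_fderiv hf p.1 p.2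
  rw [heq]
  exact (hf.fderiv_right (by simp)).clm_apply contDiff_const

lemma Px_Pt_comm (hf : ContDiff ℝ (⊤ : ℕ∞) (fun p : ℝ × ℝ => f p.1 p.2)) (x t : ℝ) :
    Px (Pt f) x t = Pt (Px f) x t := by
  set F := fun p : ℝ × ℝ => f p.1 p.2 with hF
  have hfd : Differentiable ℝ (fderiv ℝ F) :=
    (hf.fderiv_right (m := (⊤ : ℕ∞)) (by simp)).differentiable (by simp)
  have hd2 : HasFDerivAt (fderiv ℝ F) (fderiv ℝ (fderiv ℝ F) (x, t)) (x, t) :=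
    (hfd (x, t)).hasFDerivAt
  have hsymm : ∀ v w : ℝ × ℝ,
      fderiv ℝ (fderiv ℝ F) (x, t) v w = fderiv ℝ (fderiv ℝ F) (x, t) w v :=
    second_derivative_symmetric (fun y => ((hf.differentiable (by simp)) y).hasFDerivAt) hd2
  have h1 : Px (Pt f) x t = fderiv ℝ (fderiv ℝ F) (x, t) (1, 0) (0, 1) := by
    have hPt : ContDiff ℝ (⊤ : ℕ∞) (fun p : ℝ × ℝ => Pt f p.1 p.2) := contDiff_Pt hf
    rw [Px_eq_fderiv hPt]
    have heq : (fun p : ℝ × ℝ => Pt f p.1 p.2)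
        = fun p : ℝ × ℝ =>
            (ContinuousLinearMap.apply ℝ (Mat n) ((0 : ℝ), (1 : ℝ))) (fderiv ℝ F p) := by
      funext p; exact Pt_eq_fderiv hf p.1 p.2
    rw [heq]
    have hcomp : HasFDerivAt
        (fun p : ℝ × ℝ =>
          (ContinuousLinearMap.apply ℝ (Mat n) ((0 : ℝ), (1 : ℝ))) (fderiv ℝ F p))
        ((ContinuousLinearMap.apply ℝ (Mat n) ((0 : ℝ), (1 : ℝ))).comp
          (fderiv ℝ (fderiv ℝ F) (x, t))) (x, t) :=
      (ContinuousLinearMap.apply ℝ (Mat n) ((0 : ℝ), (1 : ℝ))).hasFDerivAt.comp (x, t) hd2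
    exact congrArg (fun L => L ((1 : ℝ), (0 : ℝ))) hcomp.fderiv
  have h2 : Pt (Px f) x t = fderiv ℝ (fderiv ℝ F) (x, t) (0, 1) (1, 0) := by
    have hPx : ContDiff ℝ (⊤ : ℕ∞) (fun p : ℝ × ℝ => Px f p.1 p.2) := contDiff_Px hf
    rw [Pt_eq_fderiv hPx]
    have heq : (fun p : ℝ × ℝ => Px f p.1 p.2)
        = fun p : ℝ × ℝ =>
            (ContinuousLinearMap.apply ℝ (Mat n) ((1 : ℝ), (0 : ℝ))) (fderiv ℝ F p) := by
      funext p; exact Px_eq_fderiv hf p.1 p.2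
    rw [heq]
    have hcomp : HasFDerivAt
        (fun p : ℝ × ℝ =>
          (ContinuousLinearMap.apply ℝ (Mat n) ((1 : ℝ), (0 : ℝ))) (fderiv ℝ F p))
        ((ContinuousLinearMap.apply ℝ (Mat n) ((1 : ℝ), (0 : ℝ))).comp
          (fderiv ℝ (fderiv ℝ F) (x, t))) (x, t) :=
      (ContinuousLinearMap.apply ℝ (Mat n) ((1 : ℝ), (0 : ℝ))).hasFDerivAt.comp (x, t) hd2
    exact congrArg (fun L => L ((0 : ℝ), (1 : ℝ))) hcomp.fderiv
  rw [h1, h2, hsymm]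

/-- the final pure (noncommutative) algebra step -/
lemma key {n : ℕ} (Av Bv Φv M a b c d : Mat n)
    (h1 : a + b = 0) (h2 : c - d = Bv * Av - Av * Bv) :
    (c * M - M * c + (a * Φv + Av * (Bv * M - M * Bv) - ((Bv * M - M * Bv) * Av + Φv * a)))
    + (M * d - d * M
        + (b * Φv + Bv * (M * Av - Av * M) - ((M * Av - Av * M) * Bv + Φv * b))) = 0 := by
  have ha : a = -b := eq_neg_of_add_eq_zero_left h1
  have hc : c = Bv * Av - Av * Bv + d := by rw [← h2]; noncomm_ring
  subst ha hc
  noncomm_ring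

end ChiralAux

open ChiralAux in
/-- The nonlocal characteristic Φ' = [X, M] built from the potential X satisfies the
linearized chiral symmetry condition. -/
theorem chiral_potential_symmetry {n : ℕ} (g ginv X : ℝ → ℝ → Matrix (Fin n) (Fin n) ℂ)
    (M : Matrix (Fin n) (Fin n) ℂ)
    (hg : ContDiff ℝ (⊤ : ℕ∞) (fun p : ℝ × ℝ => g p.1 p.2))
    (hginv : ContDiff ℝ (⊤ : ℕ∞) (fun p : ℝ × ℝ => ginv p.1 p.2))
    (hX : ContDiff ℝ (⊤ : ℕ∞) (fun p : ℝ × ℝ => X p.1 p.2))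
    (hinv : ∀ x t, g x t * ginv x t = 1 ∧ ginv x t * g x t = 1)
    (hsol : ∀ x t, Px (fun x' t' => ginv x' t' * Px g x' t') x t
        + Pt (fun x' t' => ginv x' t' * Pt g x' t') x t = 0)
    (hXx : ∀ x t, Px X x t = ginv x t * Pt g x t)
    (hXt : ∀ x t, Pt X x t = -(ginv x t * Px g x t)) :
    ∀ x t,
      Px (fun x' t' => Px (fun a b => X a b * M - M * X a b) x' t'
          + ((ginv x' t' * Px g x' t') * (X x' t' * M - M * X x' t')
             - (X x' t' * M - M * X x' t') * (ginv x' t' * Px g x' t'))) x t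
      + Pt (fun x' t' => Pt (fun a b => X a b * M - M * X a b) x' t'
          + ((ginv x' t' * Pt g x' t') * (X x' t' * M - M * X x' t')
             - (X x' t' * M - M * X x' t') * (ginv x' t' * Pt g x' t'))) x t
      = 0 := by
  -- smoothness of the building blocks
  have hPxg : ContDiff ℝ (⊤ : ℕ∞) (fun p : ℝ × ℝ => Px g p.1 p.2) := contDiff_Px hg
  have hPtg : ContDiff ℝ (⊤ : ℕ∞) (fun p : ℝ × ℝ => Pt g p.1 p.2) := contDiff_Pt hg
  have hCA : ContDiff ℝ (⊤ : ℕ∞) (fun p : ℝ × ℝ => ginv p.1 p.2 * Px g p.1 p.2) :=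
    contDiff_mul2 hginv hPxg
  have hCB : ContDiff ℝ (⊤ : ℕ∞) (fun p : ℝ × ℝ => ginv p.1 p.2 * Pt g p.1 p.2) :=
    contDiff_mul2 hginv hPtg
  -- derivative of the inverse
  have hPxginv : ∀ x t, Px ginv x t = -(ginv x t * Px g x t * ginv x t) := by
    intro x t
    have hprod : HasDerivAt (fun x' => ginv x' t * g x' t)
        (Px ginv x t * g x t + ginv x t * Px g x t) x :=
      hasDerivAt_mul' (hasDerivAt_Px hginv x t) (hasDerivAt_Px hg x t)
    have hconst : (fun x' => ginv x' t * g x' t) = fun _ => (1 : Mat n) :=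
      funext fun y => (hinv y t).2
    rw [hconst] at hprod
    have h0 : Px ginv x t * g x t + ginv x t * Px g x t = 0 := by
      have h := hprod.deriv
      rw [deriv_const] at h
      exact h.symm
    calc Px ginv x t = Px ginv x t * (g x t * ginv x t) := by rw [(hinv x t).1, mul_one]
      _ = Px ginv x t * g x t * ginv x t := by rw [mul_assoc]
      _ = -(ginv x t * Px g x t) * ginv x t := by rw [eq_neg_of_add_eq_zero_left h0]
      _ = -(ginv x t * Px g x t * ginv x t) := by rw [neg_mul]
  have hPtginv : ∀ x t, Pt ginv x t = -(ginv x t * Pt g x t * ginv x t) := by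
    intro x t
    have hprod : HasDerivAt (fun t' => ginv x t' * g x t')
        (Pt ginv x t * g x t + ginv x t * Pt g x t) t :=
      hasDerivAt_mul' (hasDerivAt_Pt hginv x t) (hasDerivAt_Pt hg x t)
    have hconst : (fun t' => ginv x t' * g x t') = fun _ => (1 : Mat n) :=
      funext fun s => (hinv x s).2
    rw [hconst] at hprod
    have h0 : Pt ginv x t * g x t + ginv x t * Pt g x t = 0 := by
      have h := hprod.deriv
      rw [deriv_const] at h
      exact h.symm
    calc Pt ginv x t = Pt ginv x t * (g x t * ginv x t) := by rw [(hinv x t).1, mul_one]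
      _ = Pt ginv x t * g x t * ginv x t := by rw [mul_assoc]
      _ = -(ginv x t * Pt g x t) * ginv x t := by rw [eq_neg_of_add_eq_zero_left h0]
      _ = -(ginv x t * Pt g x t * ginv x t) := by rw [neg_mul]
  -- rewrite the first-order derivatives of Φ' = [X, M]
  have hΦx : Px (fun a b => X a b * M - M * X a b)
      = fun x t => ginv x t * Pt g x t * M - M * (ginv x t * Pt g x t) := by
    funext x t
    have hX1 : HasDerivAt (fun x' => X x' t) (Px X x t) x := hasDerivAt_Px hX x t
    have hd : HasDerivAt (fun x' => X x' t * M - M * X x' t)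
        (Px X x t * M - M * Px X x t) x :=
      (hasDerivAt_mulConst hX1 M).sub (hasDerivAt_constMul hX1 M)
    have e : Px (fun a b => X a b * M - M * X a b) x t = Px X x t * M - M * Px X x t :=
      hd.deriv
    rw [e, hXx x t]
  have hΦt : Pt (fun a b => X a b * M - M * X a b)
      = fun x t => M * (ginv x t * Px g x t) - ginv x t * Px g x t * M := by
    funext x t
    have hX2 : HasDerivAt (fun t' => X x t') (Pt X x t) t := hasDerivAt_Pt hX x t
    have hd : HasDerivAt (fun t' => X x t' * M - M * X x t')
        (Pt X x t * M - M * Pt X x t) t :=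
      (hasDerivAt_mulConst hX2 M).sub (hasDerivAt_constMul hX2 M)
    have e : Pt (fun a b => X a b * M - M * X a b) x t = Pt X x t * M - M * Pt X x t :=
      hd.deriv
    rw [e, hXt x t]
    noncomm_ring
  intro x t
  simp only [hΦx, hΦt]
  -- pointwise HasDerivAt pieces
  have hA1 : HasDerivAt (fun x' => ginv x' t * Px g x' t)
      (Px (fun x' t' => ginv x' t' * Px g x' t') x t) x :=
    hasDerivAt_Px (f := fun x' t' => ginv x' t' * Px g x' t') hCA x t
  have hB1 : HasDerivAt (fun x' => ginv x' t * Pt g x' t)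
      (Px (fun x' t' => ginv x' t' * Pt g x' t') x t) x :=
    hasDerivAt_Px (f := fun x' t' => ginv x' t' * Pt g x' t') hCB x t
  have hA2 : HasDerivAt (fun t' => ginv x t' * Px g x t')
      (Pt (fun x' t' => ginv x' t' * Px g x' t') x t) t :=
    hasDerivAt_Pt (f := fun x' t' => ginv x' t' * Px g x' t') hCA x t
  have hB2 : HasDerivAt (fun t' => ginv x t' * Pt g x t')
      (Pt (fun x' t' => ginv x' t' * Pt g x' t') x t) t :=
    hasDerivAt_Pt (f := fun x' t' => ginv x' t' * Pt g x' t') hCB x t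
  have hX1 : HasDerivAt (fun x' => X x' t) (Px X x t) x := hasDerivAt_Px hX x t
  have hX2 : HasDerivAt (fun t' => X x t') (Pt X x t) t := hasDerivAt_Pt hX x t
  have hΦ1 : HasDerivAt (fun x' => X x' t * M - M * X x' t)
      (ginv x t * Pt g x t * M - M * (ginv x t * Pt g x t)) x := by
    have hd : HasDerivAt (fun x' => X x' t * M - M * X x' t)
        (Px X x t * M - M * Px X x t) x :=
      (hasDerivAt_mulConst hX1 M).sub (hasDerivAt_constMul hX1 M)
    rwa [hXx x t] at hd
  have hΦ2 : HasDerivAt (fun t' => X x t' * M - M * X x t')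
      (M * (ginv x t * Px g x t) - ginv x t * Px g x t * M) t := by
    have hd : HasDerivAt (fun t' => X x t' * M - M * X x t')
        (Pt X x t * M - M * Pt X x t) t :=
      (hasDerivAt_mulConst hX2 M).sub (hasDerivAt_constMul hX2 M)
    have hv : Pt X x t * M - M * Pt X x t
        = M * (ginv x t * Px g x t) - ginv x t * Px g x t * M := by
      rw [hXt x t]; noncomm_ring
    rwa [hv] at hd
  -- the two outer derivatives
  have hterm1 : HasDerivAt
      (fun x' => ginv x' t * Pt g x' t * M - M * (ginv x' t * Pt g x' t)
        + (ginv x' t * Px g x' t * (X x' t * M - M * X x' t)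
           - (X x' t * M - M * X x' t) * (ginv x' t * Px g x' t)))
      ((Px (fun x' t' => ginv x' t' * Pt g x' t') x t * M
          - M * Px (fun x' t' => ginv x' t' * Pt g x' t') x t)
        + (Px (fun x' t' => ginv x' t' * Px g x' t') x t * (X x t * M - M * X x t)
            + ginv x t * Px g x t * (ginv x t * Pt g x t * M - M * (ginv x t * Pt g x t))
          - ((ginv x t * Pt g x t * M - M * (ginv x t * Pt g x t)) * (ginv x t * Px g x t)
            + (X x t * M - M * X x t) * Px (fun x' t' => ginv x' t' * Px g x' t') x t))) x :=
    ((hasDerivAt_mulConst hB1 M).sub (hasDerivAt_constMul hB1 M)).add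
      ((hasDerivAt_mul' hA1 hΦ1).sub (hasDerivAt_mul' hΦ1 hA1))
  have hterm2 : HasDerivAt
      (fun t' => M * (ginv x t' * Px g x t') - ginv x t' * Px g x t' * M
        + (ginv x t' * Pt g x t' * (X x t' * M - M * X x t')
           - (X x t' * M - M * X x t') * (ginv x t' * Pt g x t')))
      ((M * Pt (fun x' t' => ginv x' t' * Px g x' t') x t
          - Pt (fun x' t' => ginv x' t' * Px g x' t') x t * M)
        + (Pt (fun x' t' => ginv x' t' * Pt g x' t') x t * (X x t * M - M * X x t)
            + ginv x t * Pt g x t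
              * (M * (ginv x t * Px g x t) - ginv x t * Px g x t * M)
          - ((M * (ginv x t * Px g x t) - ginv x t * Px g x t * M) * (ginv x t * Pt g x t)
            + (X x t * M - M * X x t) * Pt (fun x' t' => ginv x' t' * Pt g x' t') x t))) t :=
    ((hasDerivAt_constMul hA2 M).sub (hasDerivAt_mulConst hA2 M)).add
      ((hasDerivAt_mul' hB2 hΦ2).sub (hasDerivAt_mul' hΦ2 hB2))
  have e1 := hterm1.deriv
  have e2 := hterm2.deriv
  -- the goal's outer Px/Pt are exactly these derivs
  show (deriv (fun x' => ginv x' t * Pt g x' t * M - M * (ginv x' t * Pt g x' t)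
        + (ginv x' t * Px g x' t * (X x' t * M - M * X x' t)
           - (X x' t * M - M * X x' t) * (ginv x' t * Px g x' t))) x)
      + (deriv (fun t' => M * (ginv x t' * Px g x t') - ginv x t' * Px g x t' * M
        + (ginv x t' * Pt g x t' * (X x t' * M - M * X x t')
           - (X x t' * M - M * X x t') * (ginv x t' * Pt g x t'))) t) = 0
  refine (congrArg₂ (· + ·) e1 e2).trans ?_
  -- zero-curvature identity
  have hcurv : Px (fun x' t' => ginv x' t' * Pt g x' t') x t
      - Pt (fun x' t' => ginv x' t' * Px g x' t') x t
      = (ginv x t * Pt g x t) * (ginv x t * Px g x t)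
        - (ginv x t * Px g x t) * (ginv x t * Pt g x t) := by
    have eB : Px (fun x' t' => ginv x' t' * Pt g x' t') x t
        = Px ginv x t * Pt g x t + ginv x t * Px (Pt g) x t :=
      (hasDerivAt_mul' (hasDerivAt_Px hginv x t) (hasDerivAt_Px hPtg x t)).deriv
    have eA : Pt (fun x' t' => ginv x' t' * Px g x' t') x t
        = Pt ginv x t * Px g x t + ginv x t * Pt (Px g) x t :=
      (hasDerivAt_mul' (hasDerivAt_Pt hginv x t) (hasDerivAt_Pt hPxg x t)).deriv
    rw [eB, eA, hPxginv x t, hPtginv x t, Px_Pt_comm hg x t]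
    noncomm_ring
  exact key (ginv x t * Px g x t) (ginv x t * Pt g x t) (X x t * M - M * X x t) M
    (Px (fun x' t' => ginv x' t' * Px g x' t') x t)
    (Pt (fun x' t' => ginv x' t' * Pt g x' t') x t)
    (Px (fun x' t' => ginv x' t' * Pt g x' t') x t)
    (Pt (fun x' t' => ginv x' t' * Px g x' t') x t)
    (hsol x t) hcurv
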